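/- arXiv:1010.2775 — 3 statements merged into one kernel-verified Lean document; each statement's English description precedes it below -/
import Mathlib

section
/- Let n ≥ 2 and let a₁,…,aₙ ∈ ℝ² (indices taken mod n) be points, not necessarily distinct, with aᵢ ≠ a_{i+1} for every i. Assume that whenever the segments [aᵢ, a_{i+1}] and [a_j, a_{j+1}] intersect, the angle between the oriented segments is less than π/2, i.e. the inner product ⟪a_{i+1} − aᵢ, a_{j+1} − a_j⟫ is positive. Then there exist s ≥ 3 and points b₁,…,b_s ∈ ℝ² (indices mod s) with b_j ≠ b_{j+1} such that: (a) for every j, the segment [b_j, b_{j+1}] is contained in some segment [aᵢ, a_{i+1}] and b_{j+1} − b_j is a positive scalar multiple of a_{i+1} − aᵢ; and (b) the closed polygonal curve Γ(b₁,…,b_s) is simple, i.e. the loop obtained by concatenating the segments [b₁,b₂],…,[b_s,b₁] is injective except at its common starting and ending point. -/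
open RealInnerProductSpace

abbrev E2 := EuclideanSpace ℝ (Fin 2)

/-- The closed polygonal loop through the cyclically indexed vertices `b 0, b 1, …`,
parametrised so that on `[j, j+1]` it traverses the segment `[b j, b (j+1)]` affinely. -/
noncomputable def polyLoop (s : ℕ) (b : ZMod s → E2) : ℝ → E2 :=
  fun t => (1 - Int.fract t) • b ((⌊t⌋ : ℤ) : ZMod s) +
    Int.fract t • b (((⌊t⌋ : ℤ) : ZMod s) + 1)

/-!
Induction on the number of edges. If the loop is not simple, it passes through one point at two
times `t₁ < t₂` and splits there into two closed loops; each is a closed polygon whose edges are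
positively oriented pieces of edges of the original one, so it inherits the hypothesis that crossing
edges meet at acute angles, and one of them has fewer edges. That hypothesis rules out closed
polygons with two edges, so the simple loop eventually reached has at least three.
-/

section Subpolygon

variable {V : Type*}

section Module

variable [AddCommGroup V] [Module ℝ V]

def IsOrientedSubsegment (p q x y : V) : Prop :=
  segment ℝ p q ⊆ segment ℝ x y ∧ ∃ c : ℝ, 0 < c ∧ q - p = c • (y - x)

theorem IsOrientedSubsegment.refl (x y : V) : IsOrientedSubsegment x y x y :=
  ⟨subset_rfl, 1, one_pos, (one_smul ℝ _).symm⟩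

theorem IsOrientedSubsegment.trans {p q x y u v : V} (h : IsOrientedSubsegment p q x y)
    (h' : IsOrientedSubsegment x y u v) : IsOrientedSubsegment p q u v := by
  obtain ⟨hsub, c, hc, hpq⟩ := h
  obtain ⟨hsub', c', hc', hxy⟩ := h'
  exact ⟨hsub.trans hsub', c * c', mul_pos hc hc', by rw [hpq, hxy, smul_smul]⟩

theorem IsOrientedSubsegment.ne {p q x y : V} (h : IsOrientedSubsegment p q x y) (hxy : x ≠ y) :
    p ≠ q := by
  obtain ⟨-, c, hc, hpq⟩ := h
  intro rfl
  rw [sub_self, eq_comm, smul_eq_zero, sub_eq_zero] at hpq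
  exact hpq.elim hc.ne' hxy.symm

def IsSubpolygon {m n : ℕ} (b : ZMod m → V) (a : ZMod n → V) : Prop :=
  ∀ j, ∃ i, IsOrientedSubsegment (b j) (b (j + 1)) (a i) (a (i + 1))

theorem IsSubpolygon.refl {n : ℕ} (a : ZMod n → V) : IsSubpolygon a a :=
  fun i => ⟨i, .refl _ _⟩

theorem IsSubpolygon.trans {l m n : ℕ} {c : ZMod l → V} {b : ZMod m → V} {a : ZMod n → V}
    (hcb : IsSubpolygon c b) (hba : IsSubpolygon b a) : IsSubpolygon c a := fun k => by
  obtain ⟨j, hj⟩ := hcb k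
  obtain ⟨i, hi⟩ := hba j
  exact ⟨i, hj.trans hi⟩

end Module

variable [NormedAddCommGroup V] [InnerProductSpace ℝ V]

def HasAcuteCrossings {n : ℕ} (a : ZMod n → V) : Prop :=
  ∀ i j : ZMod n, (segment ℝ (a i) (a (i + 1)) ∩ segment ℝ (a j) (a (j + 1))).Nonempty →
    0 < ⟪a (i + 1) - a i, a (j + 1) - a j⟫

theorem HasAcuteCrossings.mono {m n : ℕ} {a : ZMod n → V} {b : ZMod m → V}
    (ha : HasAcuteCrossings a) (hba : IsSubpolygon b a) : HasAcuteCrossings b := by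
  rintro j j' ⟨x, hx, hx'⟩
  obtain ⟨i, hsub, c, hc, hdiff⟩ := hba j
  obtain ⟨i', hsub', c', hc', hdiff'⟩ := hba j'
  rw [hdiff, hdiff', real_inner_smul_left, real_inner_smul_right]
  exact mul_pos hc (mul_pos hc' (ha i i' ⟨x, hsub hx, hsub' hx'⟩))

/-- A closed polygon with two edges doubles back on itself, which acute crossings forbid. -/
theorem HasAcuteCrossings.three_le {n : ℕ} (hn : n ≠ 0) {a : ZMod n → V}
    (hacute : HasAcuteCrossings a) (ha : ∀ i, a i ≠ a (i + 1)) : 3 ≤ n := by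
  by_contra! h
  obtain rfl | rfl : n = 1 ∨ n = 2 := by omega
  · exact ha 0 (congrArg a (by decide))
  · have h01 : (0 : ZMod 2) + 1 = 1 := by decide
    have h10 : (1 : ZMod 2) + 1 = 0 := by decide
    have hpos :=
      hacute 0 1 ⟨a 1, by simp [h01, right_mem_segment], by simp [h10, left_mem_segment]⟩
    rw [h01, h10, ← neg_sub, inner_neg_left, neg_pos] at hpos
    exact (real_inner_self_nonneg).not_gt hpos

end Subpolygon

section polyLoop

variable {s : ℕ} (b : ZMod s → E2)

theorem polyLoop_eq_lineMap {k : ℤ} {t : ℝ} (ht : t ∈ Set.Icc (k : ℝ) (k + 1)) :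
    polyLoop s b t = AffineMap.lineMap (b k) (b ((k : ZMod s) + 1)) (t - k) := by
  rw [AffineMap.lineMap_apply_module]
  rcases ht.2.lt_or_eq with hlt | rfl
  · have hfloor : ⌊t⌋ = k := Int.floor_eq_iff.mpr ⟨ht.1, hlt⟩
    simp [polyLoop, Int.fract, hfloor]
  · have hfloor : ⌊(k : ℝ) + 1⌋ = k + 1 := by exact_mod_cast Int.floor_intCast (k + 1)
    simp [polyLoop, Int.fract, hfloor]

theorem polyLoop_add_natCast_self (t : ℝ) : polyLoop s b (t + s) = polyLoop s b t := by
  simp [polyLoop, Int.floor_add_natCast, Int.fract_add_natCast]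

theorem isOrientedSubsegment_polyLoop {k : ℤ} {u v : ℝ} (hu : u ∈ Set.Icc (k : ℝ) (k + 1))
    (hv : v ∈ Set.Icc (k : ℝ) (k + 1)) (huv : u < v) :
    IsOrientedSubsegment (polyLoop s b u) (polyLoop s b v) (b k) (b ((k : ZMod s) + 1)) := by
  have mem_segment {t : ℝ} (ht : t ∈ Set.Icc (k : ℝ) (k + 1)) :
      polyLoop s b t ∈ segment ℝ (b k) (b ((k : ZMod s) + 1)) := by
    rw [polyLoop_eq_lineMap b ht]
    exact lineMap_mem_segment ℝ _ _ ⟨by linarith [ht.1], by linarith [ht.2]⟩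
  refine ⟨(convex_segment _ _).segment_subset (mem_segment hu) (mem_segment hv), v - u,
    sub_pos.mpr huv, ?_⟩
  rw [polyLoop_eq_lineMap b hu, polyLoop_eq_lineMap b hv, AffineMap.lineMap_apply_module,
    AffineMap.lineMap_apply_module]
  module

end polyLoop

theorem exists_subpolygon_of_polyLoop_eq {n : ℕ} {a : ZMod n → E2} (ha : ∀ i, a i ≠ a (i + 1))
    {t₁ t₂ : ℝ} (hlt : t₁ < t₂) (heq : polyLoop n a t₁ = polyLoop n a t₂) :
    ∃ b : ZMod (⌈t₂⌉ - ⌊t₁⌋).toNat → E2, (∀ j, b j ≠ b (j + 1)) ∧ IsSubpolygon b a := by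
  set k := ⌊t₁⌋
  set m := (⌈t₂⌉ - k).toNat
  have hk : (k : ℝ) ≤ t₁ := Int.floor_le t₁
  have hk₁ : t₁ < k + 1 := Int.lt_floor_add_one t₁
  have hkm : k < ⌈t₂⌉ := by exact_mod_cast hk.trans_lt (hlt.trans_le (Int.le_ceil t₂))
  have hceil : (⌈t₂⌉ : ℝ) = k + m := by
    have : (m : ℤ) = ⌈t₂⌉ - k := Int.toNat_of_nonneg (by omega)
    exact_mod_cast (by omega : ⌈t₂⌉ = k + m)
  have hm : (k : ℝ) + m - 1 < t₂ := by linarith [Int.ceil_lt_add_one t₂]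
  have hm₁ : t₂ ≤ k + m := hceil ▸ Int.le_ceil t₂
  have : NeZero m := ⟨by omega⟩
  -- the breakpoints `t₁, k + 1, …, k + m - 1, t₂`, the `l`-th and `(l+1)`-st lying on edge `k + l`
  let τ : ℕ → ℝ := fun l => max t₁ (min t₂ (k + l))
  have hτ₀ : τ 0 = t₁ := max_eq_left (by simp [hk])
  have hτm : τ m = t₂ := by simp [τ, hm₁, hlt.le]
  have hτ (l : ℕ) (hl : l < m) :
      τ l ∈ Set.Icc ((k + l : ℤ) : ℝ) ((k + l : ℤ) + 1) ∧
      τ (l + 1) ∈ Set.Icc ((k + l : ℤ) : ℝ) ((k + l : ℤ) + 1) ∧ τ l < τ (l + 1) := by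
    have hlm : (l : ℝ) + 1 ≤ m := by exact_mod_cast hl
    simp only [τ, Set.mem_Icc]
    push_cast
    refine ⟨⟨?_, ?_⟩, ⟨?_, ?_⟩, ?_⟩ <;>
      simp only [max_def, min_def] <;> split_ifs <;> linarith
  have hsucc (j : ZMod m) : polyLoop n a (τ (j + 1).val) = polyLoop n a (τ (j.val + 1)) := by
    rw [ZMod.val_add, ZMod.val_one_eq_one_mod, Nat.add_mod_mod]
    rcases Nat.lt_or_ge (j.val + 1) m with hj | hj
    · rw [Nat.mod_eq_of_lt hj]
    · have hjm : j.val + 1 = m := le_antisymm (ZMod.val_lt j) hj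
      rw [hjm, Nat.mod_self, hτ₀, hτm, heq]
  have hedge (j : ZMod m) : IsOrientedSubsegment (polyLoop n a (τ j.val))
      (polyLoop n a (τ (j.val + 1))) (a (k + j.val : ℤ)) (a (((k + j.val : ℤ) : ZMod n) + 1)) := by
    obtain ⟨hu, hv, huv⟩ := hτ j.val (ZMod.val_lt j)
    exact isOrientedSubsegment_polyLoop a hu hv huv
  refine ⟨fun j => polyLoop n a (τ j.val), fun j => ?_, fun j => ⟨(k + j.val : ℤ), ?_⟩⟩
  · simp only [hsucc]
    exact (hedge j).ne (ha _)
  · simp only [hsucc]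
    exact hedge j

/-- Cut the loop at a self-intersection `t₁ < t₂` in two closed loops, from `t₁` to `t₂` and from
`t₂` to `t₁ + n`; they use at most `n + 2` edges between them, so for `n ≥ 3` one is shorter. -/
theorem exists_shorter_subpolygon_of_not_injOn {n : ℕ} (hn : 3 ≤ n) {a : ZMod n → E2}
    (ha : ∀ i, a i ≠ a (i + 1)) (hnot : ¬ Set.InjOn (polyLoop n a) (Set.Ico 0 n)) :
    ∃ m < n, 0 < m ∧ ∃ b : ZMod m → E2, (∀ j, b j ≠ b (j + 1)) ∧ IsSubpolygon b a := by
  obtain ⟨t₁, ht₁, t₂, ht₂, heq, hlt⟩ : ∃ t₁ ∈ Set.Ico (0 : ℝ) n, ∃ t₂ ∈ Set.Ico (0 : ℝ) n,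
      polyLoop n a t₁ = polyLoop n a t₂ ∧ t₁ < t₂ := by
    simp only [Set.InjOn, not_forall] at hnot
    obtain ⟨t₁, ht₁, t₂, ht₂, heq, hne⟩ := hnot
    rcases lt_or_gt_of_ne hne with h | h
    · exact ⟨t₁, ht₁, t₂, ht₂, heq, h⟩
    · exact ⟨t₂, ht₂, t₁, ht₁, heq.symm, h⟩
  have hfirst := exists_subpolygon_of_polyLoop_eq ha hlt heq
  have hsecond := exists_subpolygon_of_polyLoop_eq ha (t₁ := t₂) (t₂ := t₁ + n)
    (by linarith [ht₁.1, ht₂.2]) (by rw [polyLoop_add_natCast_self]; exact heq.symm)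
  have h₁ : 0 ≤ ⌊t₁⌋ := Int.floor_nonneg.mpr ht₁.1
  have h₂ : ⌈t₂⌉ ≤ n := Int.ceil_le.mpr ht₂.2.le
  have h₁₂ : ⌊t₁⌋ < ⌈t₂⌉ := by
    exact_mod_cast (Int.floor_le t₁).trans_lt (hlt.trans_le (Int.le_ceil t₂))
  have h₂' : ⌊t₂⌋ < n := Int.floor_lt.mpr (by exact_mod_cast ht₂.2)
  have h₁' : 0 ≤ ⌈t₁⌉ := Int.ceil_nonneg ht₁.1
  have := Int.ceil_le_floor_add_one t₁
  have := Int.ceil_le_floor_add_one t₂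
  rw [Int.ceil_add_natCast] at hsecond
  by_cases hm : (⌈t₂⌉ - ⌊t₁⌋).toNat < n
  · exact ⟨_, hm, by omega, hfirst⟩
  · exact ⟨_, by omega, by omega, hsecond⟩

theorem exists_simple_closed_subpolygon (n : ℕ) (hn : 2 ≤ n) (a : ZMod n → E2)
    (ha : ∀ i : ZMod n, a i ≠ a (i + 1))
    (hangle : ∀ i j : ZMod n,
      (segment ℝ (a i) (a (i + 1)) ∩ segment ℝ (a j) (a (j + 1))).Nonempty →
      0 < ⟪a (i + 1) - a i, a (j + 1) - a j⟫) :
    ∃ s : ℕ, 3 ≤ s ∧ ∃ b : ZMod s → E2,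
      (∀ j : ZMod s, b j ≠ b (j + 1)) ∧
      (∀ j : ZMod s, ∃ i : ZMod n,
        segment ℝ (b j) (b (j + 1)) ⊆ segment ℝ (a i) (a (i + 1)) ∧
        ∃ c : ℝ, 0 < c ∧ b (j + 1) - b j = c • (a (i + 1) - a i)) ∧
      (∀ t₁ ∈ Set.Ico (0 : ℝ) (s : ℝ), ∀ t₂ ∈ Set.Ico (0 : ℝ) (s : ℝ),
        polyLoop s b t₁ = polyLoop s b t₂ → t₁ = t₂) := by
  induction n using Nat.strong_induction_on with
  | _ n ih =>
  have hn₃ : 3 ≤ n := HasAcuteCrossings.three_le (by omega) hangle ha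
  by_cases hsimple : Set.InjOn (polyLoop n a) (Set.Ico 0 n)
  · exact ⟨n, hn₃, a, ha, IsSubpolygon.refl a, hsimple⟩
  obtain ⟨m, hmn, hm, b, hb, hba⟩ := exists_shorter_subpolygon_of_not_injOn hn₃ ha hsimple
  have hacute : HasAcuteCrossings b := HasAcuteCrossings.mono hangle hba
  obtain ⟨s, hs, c, hc, hcb, hsimple'⟩ :=
    ih m hmn (by linarith [hacute.three_le hm.ne' hb]) b hb hacute
  exact ⟨s, hs, c, hc, IsSubpolygon.trans hcb hba, hsimple'⟩
end

section
/- There exists ε > 0 with the following property. Let f and h be commuting C¹ diffeomorphisms of ℝ², each satisfying ‖g(x) − x‖ < ε and ‖Dg(x) − Id‖ < ε for all x ∈ ℝ², and let x ∈ ℝ² be such that f(x) ≠ x. Then for every i ∈ ℤ and every point λ in the segment [f^i(x), f^{i+1}(x)], one has ‖h(λ) − f^i(h(x))‖ ≤ 3 · ‖f^{i+1}(h(x)) − f^i(h(x))‖. -/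
/-- A `C¹` diffeomorphism of the plane that is `ε`-close to the identity in the
`C¹` sense: `‖f(x) - x‖ < ε` and `‖Df(x) - Id‖ < ε` everywhere. -/
def NearIdDiffeo (ε : ℝ) (f : Equiv.Perm E2) : Prop :=
  ContDiff ℝ 1 ⇑f ∧ ContDiff ℝ 1 ⇑f.symm ∧
  (∀ x : E2, ‖f x - x‖ < ε) ∧
  (∀ x : E2, ‖fderiv ℝ (⇑f) x - ContinuousLinearMap.id ℝ E2‖ < ε)

/-!
Commutation gives `f^i (h x) = h (f^i x)`, so the claim compares `h` on the segment
`[f^i x, f^(i+1) x]` with `h` at its endpoints. A map whose derivative is `ε`-close to the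
identity is `(1 + ε)`-Lipschitz and expands distances by at least `1 - ε`; for `ε = 1/2`
the ratio of these constants is `3`.
-/

section NearIdentity

variable {E : Type*} [NormedAddCommGroup E] [NormedSpace ℝ E] {g : E → E} {ε : ℝ}

theorem norm_sub_sub_sub_le_of_norm_fderiv_sub_id_le (hg : Differentiable ℝ g)
    (hε : ∀ x, ‖fderiv ℝ g x - ContinuousLinearMap.id ℝ E‖ ≤ ε) (a b : E) :
    ‖(g a - g b) - (a - b)‖ ≤ ε * ‖a - b‖ := by
  have hderiv : ∀ x,
      HasFDerivAt (fun z => g z - z) (fderiv ℝ g x - ContinuousLinearMap.id ℝ E) x :=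
    fun x => (hg x).hasFDerivAt.sub (hasFDerivAt_id x)
  have := Convex.norm_image_sub_le_of_norm_hasFDerivWithin_le
    (fun x _ => (hderiv x).hasFDerivWithinAt) (fun x _ => hε x) convex_univ
    (Set.mem_univ b) (Set.mem_univ a)
  simpa only [sub_sub_sub_comm] using this

theorem norm_sub_le_of_norm_fderiv_sub_id_le (hg : Differentiable ℝ g)
    (hε : ∀ x, ‖fderiv ℝ g x - ContinuousLinearMap.id ℝ E‖ ≤ ε) (a b : E) :
    ‖g a - g b‖ ≤ (1 + ε) * ‖a - b‖ := by
  have := norm_sub_sub_sub_le_of_norm_fderiv_sub_id_le hg hε a b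
  have := norm_le_norm_add_norm_sub' (g a - g b) (a - b)
  linarith

theorem le_norm_sub_of_norm_fderiv_sub_id_le (hg : Differentiable ℝ g)
    (hε : ∀ x, ‖fderiv ℝ g x - ContinuousLinearMap.id ℝ E‖ ≤ ε) (a b : E) :
    (1 - ε) * ‖a - b‖ ≤ ‖g a - g b‖ := by
  have := norm_sub_sub_sub_le_of_norm_fderiv_sub_id_le hg hε a b
  have := norm_sub_norm_le (a - b) (g a - g b)
  rw [norm_sub_rev (a - b)] at this
  linarith

end NearIdentity

theorem NearIdDiffeo.differentiable {ε : ℝ} {f : Equiv.Perm E2} (hf : NearIdDiffeo ε f) :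
    Differentiable ℝ f :=
  hf.1.differentiable one_ne_zero

theorem NearIdDiffeo.norm_fderiv_sub_id_le {ε : ℝ} {f : Equiv.Perm E2} (hf : NearIdDiffeo ε f)
    (x : E2) : ‖fderiv ℝ f x - ContinuousLinearMap.id ℝ E2‖ ≤ ε :=
  (hf.2.2.2 x).le

theorem Equiv.Perm.zpow_apply_of_commute {α : Type*} {f h : Equiv.Perm α} (hfh : Commute f h)
    (i : ℤ) (x : α) : (f ^ i) (h x) = h ((f ^ i) x) :=
  DFunLike.congr_fun ((hfh.zpow_left i).eq) x

theorem image_of_segment_near_iterate :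
    ∃ ε > (0 : ℝ), ∀ f h : Equiv.Perm E2,
      NearIdDiffeo ε f → NearIdDiffeo ε h → f * h = h * f →
      ∀ x : E2, f x ≠ x →
      ∀ i : ℤ, ∀ l ∈ segment ℝ ((f ^ i) x) ((f ^ (i + 1)) x),
        ‖h l - (f ^ i) (h x)‖ ≤ 3 * ‖(f ^ (i + 1)) (h x) - (f ^ i) (h x)‖ := by
  refine ⟨1 / 2, by norm_num, fun f h _ hh hfh x _ i l hl => ?_⟩
  rw [Equiv.Perm.zpow_apply_of_commute hfh, Equiv.Perm.zpow_apply_of_commute hfh]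
  set A := (f ^ i) x
  set B := (f ^ (i + 1)) x
  have hlA : ‖l - A‖ ≤ ‖B - A‖ := norm_sub_le_of_mem_segment hl
  have hupper := norm_sub_le_of_norm_fderiv_sub_id_le hh.differentiable
    hh.norm_fderiv_sub_id_le l A
  have hlower := le_norm_sub_of_norm_fderiv_sub_id_le hh.differentiable
    hh.norm_fderiv_sub_id_le B A
  calc ‖h l - h A‖ ≤ (1 + 1 / 2) * ‖l - A‖ := hupper
    _ ≤ (1 + 1 / 2) * ‖B - A‖ := by gcongr
    _ = 3 * ((1 - 1 / 2) * ‖B - A‖) := by ring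
    _ ≤ 3 * ‖h B - h A‖ := by gcongr
end

section
/- For every ε > 0 there exist a C^∞ diffeomorphism g of ℝ² which equals the identity outside a compact set and satisfies ‖g(x) − x‖ < ε for all x ∈ ℝ², and a point p ∈ ℝ² whose orbit O_p(g) = {g^j(p) : j ∈ ℤ} is finite (in particular bounded), such that no fixed point of g lies in the convex hull of O_p(g). -/
open Real Metric Module

section Shear

variable {E : Type*} [NormedAddCommGroup E] [NormedSpace ℝ E]

def shear (ℓ : E →L[ℝ] ℝ) (v : E) (hv : ℓ v = 0) (f : ℝ → ℝ) : Equiv.Perm E where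
  toFun x := x + f (ℓ x) • v
  invFun x := x - f (ℓ x) • v
  left_inv x := by simp [hv]
  right_inv x := by simp [hv]

variable {ℓ : E →L[ℝ] ℝ} {v : E} {hv : ℓ v = 0} {f : ℝ → ℝ}

lemma shear_apply (x : E) : shear ℓ v hv f x = x + f (ℓ x) • v := rfl

lemma shear_symm_apply (x : E) : (shear ℓ v hv f).symm x = x - f (ℓ x) • v := rfl

lemma contDiff_shear {n : WithTop ℕ∞} (hf : ContDiff ℝ n f) : ContDiff ℝ n (shear ℓ v hv f) :=
  contDiff_id.add ((hf.comp ℓ.contDiff).smul contDiff_const)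

lemma contDiff_shear_symm {n : WithTop ℕ∞} (hf : ContDiff ℝ n f) :
    ContDiff ℝ n (shear ℓ v hv f).symm :=
  contDiff_id.sub ((hf.comp ℓ.contDiff).smul contDiff_const)

lemma norm_shear_apply_sub (x : E) : ‖shear ℓ v hv f x - x‖ = ‖f (ℓ x)‖ * ‖v‖ := by
  rw [shear_apply, add_sub_cancel_left, norm_smul]

lemma norm_shear_symm_apply_sub (x : E) :
    ‖(shear ℓ v hv f).symm x - x‖ = ‖f (ℓ x)‖ * ‖v‖ := by
  rw [shear_symm_apply, sub_sub_cancel_left, norm_neg, norm_smul]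

end Shear

section RadialTwist

variable {V : Type*} [NormedAddCommGroup V] [InnerProductSpace ℝ V] [Fact (finrank ℝ V = 2)]
  (o : Orientation ℝ V (Fin 2))

/-- The angle is a function of `‖x‖ ^ 2` rather than `‖x‖` so that the twist is smooth at `0`. -/
noncomputable def radialTwist (θ : ℝ → ℝ) : Equiv.Perm V where
  toFun x := o.rotation (θ (‖x‖ ^ 2)) x
  invFun x := o.rotation (-θ (‖x‖ ^ 2)) x
  left_inv x := by simp
  right_inv x := by simp

variable {o} {θ : ℝ → ℝ}

lemma radialTwist_apply (x : V) : radialTwist o θ x = o.rotation (θ (‖x‖ ^ 2)) x := rfl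

lemma radialTwist_symm : (radialTwist o θ).symm = radialTwist o (-θ) := by
  ext1 x
  simp [radialTwist]

lemma contDiff_radialTwist {n : WithTop ℕ∞} (hθ : ContDiff ℝ n θ) :
    ContDiff ℝ n (radialTwist o θ) := by
  have hangle : ContDiff ℝ n fun x : V => θ (‖x‖ ^ 2) := hθ.comp (contDiff_norm_sq ℝ)
  simp only [radialTwist, Equiv.coe_fn_mk, o.rotation_apply, Real.Angle.cos_coe,
    Real.Angle.sin_coe]
  exact ((contDiff_cos.comp hangle).smul contDiff_id).add
    ((contDiff_sin.comp hangle).smul o.rightAngleRotation.contDiff)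

lemma radialTwist_apply_of_eq_zero {x : V} (h : θ (‖x‖ ^ 2) = 0) : radialTwist o θ x = x := by
  simp [radialTwist_apply, h]

lemma radialTwist_apply_of_eq_pi {x : V} (h : θ (‖x‖ ^ 2) = π) : radialTwist o θ x = -x := by
  simp [radialTwist_apply, h]

lemma norm_radialTwist_apply_sub_le (x : V) : ‖radialTwist o θ x - x‖ ≤ 2 * ‖x‖ :=
  calc ‖radialTwist o θ x - x‖ ≤ ‖radialTwist o θ x‖ + ‖x‖ := norm_sub_le _ _
    _ = 2 * ‖x‖ := by rw [radialTwist_apply, LinearIsometryEquiv.norm_map]; ring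

end RadialTwist

lemma Equiv.Perm.conj_apply_eq_self_iff {α : Type*} (S T : Equiv.Perm α) (x : α) :
    (T⁻¹ * S * T) x = x ↔ S (T x) = T x := by
  rw [Equiv.Perm.mul_apply, Equiv.Perm.mul_apply, Equiv.Perm.inv_eq_iff_eq]

lemma Equiv.Perm.norm_conj_apply_sub_le {E : Type*} [SeminormedAddCommGroup E]
    (S T : Equiv.Perm E) {δ : ℝ} (hT : ∀ x, ‖T x - x‖ ≤ δ) (hT' : ∀ x, ‖T.symm x - x‖ ≤ δ)
    (x : E) : ‖(T⁻¹ * S * T) x - x‖ ≤ ‖S (T x) - T x‖ + 2 * δ := by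
  have hsplit : (T⁻¹ * S * T) x - x =
      (T.symm (S (T x)) - S (T x)) + (S (T x) - T x) + (T x - x) := by
    simp [Equiv.Perm.inv_def]
  rw [hsplit]
  linarith [norm_add₃_le (a := T.symm (S (T x)) - S (T x)) (b := S (T x) - T x) (c := T x - x),
    hT x, hT' (S (T x))]

lemma ContDiffBump.norm_apply_le_one {F : Type*} [NormedAddCommGroup F] [NormedSpace ℝ F]
    [HasContDiffBump F] {c : F} (f : ContDiffBump c) (x : F) : ‖f x‖ ≤ 1 := by
  rw [Real.norm_of_nonneg f.nonneg]
  exact f.le_one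

noncomputable section Construction

open scoped EuclideanSpace

variable {s : ℝ} (hs : 0 < s)

def shearBump : ContDiffBump (0 : ℝ) := ⟨s / 2, s, half_pos hs, half_lt_self hs⟩

def twistBump : ContDiffBump (0 : ℝ) := ⟨4 * s ^ 2, 9 * s ^ 2, by positivity, by nlinarith⟩

def verticalShear : Equiv.Perm E2 :=
  shear (EuclideanSpace.proj 0) (EuclideanSpace.single 1 s) (by simp) (shearBump hs)

def halfTurn : Equiv.Perm E2 :=
  radialTwist (EuclideanSpace.basisFun (Fin 2) ℝ).toBasis.orientation
    fun t => π * twistBump hs t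

def swapMap : Equiv.Perm E2 := (verticalShear hs)⁻¹ * halfTurn hs * verticalShear hs

variable {hs}

lemma verticalShear_apply_of_le_abs {x : E2} (h : s ≤ |x 0|) : verticalShear hs x = x := by
  have : shearBump hs (x 0) = 0 :=
    (shearBump hs).zero_of_le_dist (by simpa [shearBump, Real.dist_eq] using h)
  simp [verticalShear, shear_apply, this]

lemma verticalShear_apply_zero (x : E2) : verticalShear hs x 0 = x 0 := by
  simp [verticalShear, shear_apply]

lemma verticalShear_apply_one (x : E2) :
    verticalShear hs x 1 = x 1 + shearBump hs (x 0) * s := by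
  simp [verticalShear, shear_apply]

lemma norm_verticalShear_apply_sub_le (x : E2) : ‖verticalShear hs x - x‖ ≤ s := by
  rw [verticalShear, norm_shear_apply_sub, PiLp.norm_single, Real.norm_of_nonneg hs.le]
  exact mul_le_of_le_one_left hs.le ((shearBump hs).norm_apply_le_one _)

lemma norm_verticalShear_symm_apply_sub_le (x : E2) :
    ‖(verticalShear hs).symm x - x‖ ≤ s := by
  rw [verticalShear, norm_shear_symm_apply_sub, PiLp.norm_single, Real.norm_of_nonneg hs.le]
  exact mul_le_of_le_one_left hs.le ((shearBump hs).norm_apply_le_one _)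

lemma contDiff_verticalShear : ContDiff ℝ (⊤ : ℕ∞) (verticalShear hs) :=
  contDiff_shear (shearBump hs).contDiff

lemma contDiff_verticalShear_symm : ContDiff ℝ (⊤ : ℕ∞) (verticalShear hs).symm :=
  contDiff_shear_symm (shearBump hs).contDiff

lemma halfTurn_apply_of_norm_le {y : E2} (h : ‖y‖ ≤ 2 * s) : halfTurn hs y = -y := by
  have hmem : ‖y‖ ^ 2 ∈ closedBall 0 (twistBump hs).rIn := by
    rw [mem_closedBall, Real.dist_eq, sub_zero, abs_sq]
    simp only [twistBump]
    nlinarith [norm_nonneg y]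
  exact radialTwist_apply_of_eq_pi (by rw [(twistBump hs).one_of_mem_closedBall hmem, mul_one])

lemma halfTurn_apply_of_le_norm {y : E2} (h : 3 * s ≤ ‖y‖) : halfTurn hs y = y := by
  have hdist : (twistBump hs).rOut ≤ dist (‖y‖ ^ 2) 0 := by
    rw [Real.dist_eq, sub_zero, abs_sq]
    simp only [twistBump]
    nlinarith
  exact radialTwist_apply_of_eq_zero (by rw [(twistBump hs).zero_of_le_dist hdist, mul_zero])

lemma norm_halfTurn_apply_sub_lt (y : E2) : ‖halfTurn hs y - y‖ < 6 * s := by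
  rcases le_or_gt (3 * s) ‖y‖ with h | h
  · rw [halfTurn_apply_of_le_norm h, sub_self, norm_zero]
    positivity
  · exact (norm_radialTwist_apply_sub_le y).trans_lt (by linarith)

lemma contDiff_halfTurn : ContDiff ℝ (⊤ : ℕ∞) (halfTurn hs) :=
  contDiff_radialTwist (contDiff_const.mul (twistBump hs).contDiff)

lemma contDiff_halfTurn_symm : ContDiff ℝ (⊤ : ℕ∞) (halfTurn hs).symm := by
  rw [halfTurn, radialTwist_symm]
  exact contDiff_radialTwist (contDiff_const.mul (twistBump hs).contDiff).neg

lemma contDiff_swapMap : ContDiff ℝ (⊤ : ℕ∞) (swapMap hs) :=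
  contDiff_verticalShear_symm.comp (contDiff_halfTurn.comp contDiff_verticalShear)

lemma contDiff_swapMap_symm : ContDiff ℝ (⊤ : ℕ∞) (swapMap hs).symm := by
  rw [← Equiv.Perm.inv_def, swapMap, mul_inv_rev, mul_inv_rev, inv_inv, ← mul_assoc]
  exact contDiff_verticalShear_symm.comp (contDiff_halfTurn_symm.comp contDiff_verticalShear)

lemma norm_swapMap_apply_sub_lt (x : E2) : ‖swapMap hs x - x‖ < 8 * s := by
  rw [swapMap]
  linarith [(halfTurn hs).norm_conj_apply_sub_le (verticalShear hs)
    norm_verticalShear_apply_sub_le norm_verticalShear_symm_apply_sub_le x,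
    norm_halfTurn_apply_sub_lt (hs := hs) (verticalShear hs x)]

lemma swapMap_apply_of_lt_norm {x : E2} (h : 4 * s < ‖x‖) : swapMap hs x = x := by
  rw [swapMap, Equiv.Perm.conj_apply_eq_self_iff]
  apply halfTurn_apply_of_le_norm
  linarith [norm_le_insert (verticalShear hs x) x, norm_verticalShear_apply_sub_le (hs := hs) x]

lemma swapMap_apply_single {c : ℝ} (hc : |c| = s) :
    swapMap hs (EuclideanSpace.single 0 c) = EuclideanSpace.single 0 (-c) := by
  have hfix : ∀ c' : ℝ, |c'| = s →
      verticalShear hs (EuclideanSpace.single 0 c') = EuclideanSpace.single 0 c' :=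
    fun c' hc' => verticalShear_apply_of_le_abs (by simp [hc'])
  have hturn : halfTurn hs (EuclideanSpace.single 0 c) = EuclideanSpace.single 0 (-c) := by
    rw [halfTurn_apply_of_norm_le (by simp [hc]; linarith)]
    exact (PiLp.single_neg _ _).symm
  rw [swapMap, Equiv.Perm.mul_apply, Equiv.Perm.mul_apply, hfix c hc, hturn,
    Equiv.Perm.inv_eq_iff_eq, hfix (-c) (by rw [abs_neg, hc])]

lemma swapMap_apply_ne_self_of_mem_segment {z : E2}
    (hz : z ∈ segment ℝ (EuclideanSpace.single 0 s) (EuclideanSpace.single 0 (-s))) :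
    swapMap hs z ≠ z := by
  have hz_norm : ‖z‖ ≤ s := by
    simpa using (convex_closedBall (0 : E2) s).segment_subset (by simp [abs_of_pos hs])
      (by simp [abs_of_pos hs]) hz
  have hz_one : z 1 = 0 := by
    simpa using (LinearMap.ker (EuclideanSpace.proj 1 : E2 →L[ℝ] ℝ).toLinearMap).convex
      |>.segment_subset (by simp) (by simp) hz
  have hshear_norm : ‖verticalShear hs z‖ ≤ 2 * s := by
    linarith [norm_le_insert' (verticalShear hs z) z, norm_verticalShear_apply_sub_le (hs := hs) z]
  rw [Ne, swapMap, Equiv.Perm.conj_apply_eq_self_iff, halfTurn_apply_of_norm_le hshear_norm]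
  intro h
  have : IsAddTorsionFree E2 := .of_module_rat E2
  have hshear_zero : verticalShear hs z = 0 := neg_eq_self.1 h
  have hz_zero : z 0 = 0 := by rw [← verticalShear_apply_zero (hs := hs), hshear_zero]; rfl
  have hs_zero : verticalShear hs z 1 = 0 := by rw [hshear_zero]; rfl
  rw [verticalShear_apply_one, hz_one, hz_zero,
    (shearBump hs).one_of_mem_closedBall (mem_closedBall_self (half_pos hs).le)] at hs_zero
  linarith

end Construction

theorem counterexample_C0_close_to_identity :
    ∀ ε > (0 : ℝ), ∃ g : Equiv.Perm E2,
      ContDiff ℝ (⊤ : ℕ∞) ⇑g ∧ ContDiff ℝ (⊤ : ℕ∞) ⇑g.symm ∧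
      (∃ C : Set E2, IsCompact C ∧ ∀ x ∉ C, g x = x) ∧
      (∀ x : E2, ‖g x - x‖ < ε) ∧
      ∃ p : E2, (Set.range fun j : ℤ => (g ^ j) p).Finite ∧
        ∀ q : E2, g q = q → q ∉ convexHull ℝ (Set.range fun j : ℤ => (g ^ j) p) := by
  intro ε hε
  obtain ⟨s, hs, rfl⟩ : ∃ s > 0, ε = 8 * s := ⟨ε / 8, by positivity, by ring⟩
  have hswap : swapMap hs (EuclideanSpace.single 0 s) = EuclideanSpace.single 0 (-s) :=
    swapMap_apply_single (abs_of_pos hs)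
  have horbit : (Set.range fun j : ℤ => (swapMap hs ^ j) (EuclideanSpace.single 0 s)) ⊆
      {EuclideanSpace.single 0 s, EuclideanSpace.single 0 (-s)} := by
    rintro _ ⟨j, rfl⟩
    rw [← hswap]
    refine Equiv.Perm.zpow_apply_eq_of_apply_apply_eq_self ?_ j
    rw [hswap, swapMap_apply_single (by rw [abs_neg, abs_of_pos hs]), neg_neg]
  refine ⟨swapMap hs, contDiff_swapMap, contDiff_swapMap_symm,
    ⟨closedBall 0 (4 * s), isCompact_closedBall _ _,
      fun x hx => swapMap_apply_of_lt_norm (by simpa using hx)⟩,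
    norm_swapMap_apply_sub_lt, EuclideanSpace.single 0 s, (Set.toFinite _).subset horbit,
    fun q hq hmem => swapMap_apply_ne_self_of_mem_segment ?_ hq⟩
  rw [← convexHull_pair]
  exact convexHull_mono horbit hmem
end
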